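/- arXiv:2010.05000 — 2 statements merged into one kernel-verified Lean document; each statement's English description precedes it below -/
import Mathlib

section
/- For n ≥ 3, the commuting graph Δ(B_n) is not Eulerian, i.e., it has a vertex of odd degree. -/
/-- Multiplication of nonzero elements of the Brandt semigroup `B_n`:
`(i,j)·(k,l) = (i,l)` if `j = k`, and `0` (here `none`) otherwise. -/
def brandtMul {n : ℕ} (x y : Fin n × Fin n) : Option (Fin n × Fin n) :=
  if x.2 = y.1 then some (x.1, y.2) else none

/-- The commuting graph of the Brandt semigroup `B_n`. -/
def brandtGraph (n : ℕ) : SimpleGraph (Fin n × Fin n) where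
  Adj x y := x ≠ y ∧ brandtMul x y = brandtMul y x
  symm := ⟨by intro x y h; exact ⟨h.1.symm, h.2.symm⟩⟩
  loopless := ⟨by intro x h; exact h.1 rfl⟩

instance {n : ℕ} : DecidableRel (brandtGraph n).Adj :=
  fun x y => decidable_of_iff (x ≠ y ∧ brandtMul x y = brandtMul y x) Iff.rfl

/-! The degree of `(i, j)` is `(n - 1)²` on the diagonal and `(n - 1)² - 1` off it, since the
neighbours of `(i, j)` are the pairs `(k, l) ≠ (i, j)` with `k ≠ j` and `l ≠ i`. These two degrees
have opposite parities, and there are vertices of both kinds. -/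

namespace brandtGraph

open Finset

variable {n : ℕ}

theorem adj_iff (x y : Fin n × Fin n) :
    (brandtGraph n).Adj x y ↔ x ≠ y ∧ x.2 ≠ y.1 ∧ y.2 ≠ x.1 := by
  simp only [brandtGraph, brandtMul]
  constructor
  · rintro ⟨hne, hmul⟩
    refine ⟨hne, fun h => ?_, fun h => ?_⟩ <;> split_ifs at hmul <;>
      simp_all [Prod.ext_iff, eq_comm]
  · rintro ⟨hne, h₁, h₂⟩
    simp [hne, h₁, h₂]

theorem neighborFinset_eq (v : Fin n × Fin n) :
    (brandtGraph n).neighborFinset v = ((univ.erase v.2) ×ˢ (univ.erase v.1)).erase v := by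
  ext y
  simp only [SimpleGraph.mem_neighborFinset, adj_iff, mem_erase, mem_product, mem_univ, and_true]
  grind

theorem degree_diag (i : Fin n) : (brandtGraph n).degree (i, i) = (n - 1) ^ 2 := by
  rw [← SimpleGraph.card_neighborFinset_eq_degree, neighborFinset_eq,
    erase_eq_of_notMem (by simp), card_product]
  simp [sq]

theorem degree_add_one_of_ne {i j : Fin n} (h : i ≠ j) :
    (brandtGraph n).degree (i, j) + 1 = (n - 1) ^ 2 := by
  rw [← SimpleGraph.card_neighborFinset_eq_degree, neighborFinset_eq,
    card_erase_add_one (by simp [h, h.symm]), card_product]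
  simp [sq]

end brandtGraph

theorem brandt_not_eulerian (n : ℕ) (hn : 3 ≤ n) :
    ∃ v : Fin n × Fin n, Odd ((brandtGraph n).degree v) := by
  rcases Nat.even_or_odd n with hev | hodd
  · let i : Fin n := ⟨0, by omega⟩
    refine ⟨(i, i), ?_⟩
    rw [brandtGraph.degree_diag]
    exact (Nat.Even.sub_odd (by omega) hev odd_one).pow
  · let i : Fin n := ⟨0, by omega⟩
    let j : Fin n := ⟨1, by omega⟩
    have hij : i ≠ j := by simp [i, j]
    refine ⟨(i, j), ?_⟩
    have hsq : Even ((n - 1) ^ 2) := (Nat.Odd.sub_odd hodd odd_one).pow_of_ne_zero two_ne_zero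
    rwa [← brandtGraph.degree_add_one_of_ne hij, Nat.even_add_one, Nat.not_even_iff_odd] at hsq
end

section
/- For n ≥ 3, the commuting graph Δ(B_n) is connected and has diameter 2: any two distinct non-adjacent vertices have a common neighbor. -/
/-! Two distinct vertices commute exactly when both products vanish, since `xy = yx ≠ 0` would
force `x = y`. Any two vertices are then joined through `(e, f)` with `e` avoiding both second
coordinates and `f` both first coordinates, and such `e, f` exist as soon as `n ≥ 3`. -/

namespace SimpleGraph

variable {V : Type*} {G : SimpleGraph V}

lemma edist_le_two_of_forall_exists_common_neighbor
    (h : ∀ u v, u ≠ v → ¬ G.Adj u v → ∃ w, G.Adj u w ∧ G.Adj w v) (u v : V) :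
    G.edist u v ≤ 2 := by
  refine not_lt.mp fun hlt => ?_
  obtain ⟨huv, hnadj, hempty⟩ := two_lt_edist_iff.mp hlt
  obtain ⟨w, huw, hwv⟩ := h u v huv hnadj
  exact (hempty ▸ G.mem_commonNeighbors.mpr ⟨huw, hwv.symm⟩ : w ∈ (∅ : Set V))

lemma ediam_eq_two_of_forall_exists_common_neighbor
    (h : ∀ u v, u ≠ v → ¬ G.Adj u v → ∃ w, G.Adj u w ∧ G.Adj w v)
    {u v : V} (huv : u ≠ v) (hnadj : ¬ G.Adj u v) : G.ediam = 2 := by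
  refine le_antisymm (ediam_le_of_edist_le (edist_le_two_of_forall_exists_common_neighbor h)) ?_
  obtain ⟨w, huw, hwv⟩ := h u v huv hnadj
  have hdist : G.edist u v = 2 :=
    edist_eq_two_iff.mpr ⟨huv, hnadj, w, G.mem_commonNeighbors.mpr ⟨huw, hwv.symm⟩⟩
  exact hdist ▸ edist_le_ediam

end SimpleGraph

lemma Fintype.exists_ne_ne_of_three_le_card {α : Type*} [Fintype α]
    (h : 3 ≤ Fintype.card α) (a b : α) : ∃ c, c ≠ a ∧ c ≠ b := by
  classical
  have hcard : ({a, b} : Finset α).card < (Finset.univ : Finset α).card :=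
    (Finset.card_le_two).trans_lt (by rw [Finset.card_univ]; omega)
  obtain ⟨c, -, hc⟩ := Finset.exists_mem_notMem_of_card_lt_card hcard
  simp only [Finset.mem_insert, Finset.mem_singleton, not_or] at hc
  exact ⟨c, hc⟩

lemma brandtGraph_adj_iff {n : ℕ} {x y : Fin n × Fin n} :
    (brandtGraph n).Adj x y ↔ x ≠ y ∧ x.2 ≠ y.1 ∧ y.2 ≠ x.1 := by
  obtain ⟨a, b⟩ := x
  obtain ⟨c, d⟩ := y
  simp only [brandtGraph, brandtMul]
  split_ifs <;> grind

lemma brandtGraph_not_adj_swap {n : ℕ} (i j : Fin n) : ¬ (brandtGraph n).Adj (i, j) (j, i) :=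
  fun h => (brandtGraph_adj_iff.mp h).2.1 rfl

lemma brandtGraph_exists_common_neighbor {n : ℕ} (hn : 3 ≤ n) {u v : Fin n × Fin n}
    (huv : u ≠ v) (hnadj : ¬ (brandtGraph n).Adj u v) :
    ∃ w, (brandtGraph n).Adj u w ∧ (brandtGraph n).Adj w v := by
  have hcard : 3 ≤ Fintype.card (Fin n) := by rwa [Fintype.card_fin]
  obtain ⟨e, heu, hev⟩ := Fintype.exists_ne_ne_of_three_le_card hcard u.2 v.2
  obtain ⟨f, hfu, hfv⟩ := Fintype.exists_ne_ne_of_three_le_card hcard u.1 v.1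
  have hlink : u.2 = v.1 ∨ v.2 = u.1 := by
    rw [brandtGraph_adj_iff] at hnadj
    tauto
  refine ⟨(e, f), brandtGraph_adj_iff.mpr ⟨?_, heu.symm, hfu⟩,
    brandtGraph_adj_iff.mpr ⟨?_, hfv, hev.symm⟩⟩ <;>
  · rw [Ne, Prod.ext_iff]
    grind

theorem brandt_connected_diam (n : ℕ) (hn : 3 ≤ n) :
    (brandtGraph n).Connected ∧ (brandtGraph n).diam = 2 ∧
    ∀ u v : Fin n × Fin n, u ≠ v → ¬ (brandtGraph n).Adj u v →
      ∃ w, (brandtGraph n).Adj u w ∧ (brandtGraph n).Adj w v := by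
  have hcommon : ∀ u v : Fin n × Fin n, u ≠ v → ¬ (brandtGraph n).Adj u v →
      ∃ w, (brandtGraph n).Adj u w ∧ (brandtGraph n).Adj w v :=
    fun _ _ => brandtGraph_exists_common_neighbor hn
  let i : Fin n := ⟨0, by omega⟩
  let j : Fin n := ⟨1, by omega⟩
  have hij : (i, j) ≠ (j, i) := by simp [i, j, Prod.ext_iff, Fin.ext_iff]
  have hediam : (brandtGraph n).ediam = 2 :=
    SimpleGraph.ediam_eq_two_of_forall_exists_common_neighbor hcommon hij
      (brandtGraph_not_adj_swap i j)
  have : Nonempty (Fin n × Fin n) := ⟨(i, j)⟩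
  refine ⟨SimpleGraph.connected_of_ediam_ne_top (by simp [hediam]), ?_, hcommon⟩
  rw [SimpleGraph.diam, hediam]
  rfl
end
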